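/- arXiv:2601.20117 — 3 statements merged into one kernel-verified Lean document; each statement's English description precedes it below -/
import Mathlib

section
/- For a > 0 and 1 < p < 2, the improper integral ∫₀^∞ x^(p-2) sin(ax) dx equals (1/a^(p-1)) · Γ(p) cos(πp/2) / (1-p). -/
open Real MeasureTheory Filter

open Real MeasureTheory Filter Set Topology

namespace ImproperSinAux

lemma integrableOn_rpow_exp {s b : ℝ} (hs : 0 < s) (hb : 0 < b) :
    IntegrableOn (fun x : ℝ => x ^ (s - 1) * Real.exp (-b * x)) (Ioi 0) := by
  have := integrableOn_rpow_mul_exp_neg_mul_rpow (p := 1) (s := s - 1) (b := b)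
    (by linarith) zero_lt_one hb
  exact this.congr_fun (fun x hx => by simp only [Real.rpow_one]) measurableSet_Ioi

lemma contOn_cpow (c : ℂ) : ContinuousOn (fun t : ℝ => (t:ℂ) ^ c) (Ioi 0) := by
  intro t ht
  have h1 : ContinuousAt (fun z : ℂ => z ^ c) (t:ℂ) := by
    apply continuousAt_cpow_const
    exact Or.inl (by simpa using ht)
  exact (h1.comp Complex.continuous_ofReal.continuousAt).continuousWithinAt

lemma integrable_cf {s : ℝ} (hs : 0 < s) {z : ℂ} (hz : 0 < z.re) :
    IntegrableOn (fun t : ℝ => (t:ℂ) ^ ((s:ℂ) - 1) * Complex.exp (-z * t)) (Ioi 0) := by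
  refine (integrableOn_rpow_exp hs hz).mono' ?_ ?_
  · refine ContinuousOn.aestronglyMeasurable ?_ measurableSet_Ioi
    exact (contOn_cpow _).mul (Complex.continuous_exp.comp
      ((continuous_const.mul Complex.continuous_ofReal))).continuousOn
  · filter_upwards [ae_restrict_mem measurableSet_Ioi] with t ht
    rw [norm_mul,
      Complex.norm_cpow_eq_rpow_re_of_pos ht, Complex.norm_exp]
    apply le_of_eq
    simp [Complex.neg_re, Complex.mul_re]

lemma norm_cf_integrand {s : ℝ} {t : ℝ} (ht : 0 < t) (c : ℂ) (z : ℂ) (hc : c.re = s) :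
    ‖(t:ℂ) ^ c * Complex.exp (-z * t)‖ = t ^ s * Real.exp (-(z.re * t)) := by
  rw [norm_mul,
    Complex.norm_cpow_eq_rpow_re_of_pos ht, Complex.norm_exp, hc]
  congr 2
  simp [Complex.neg_re, Complex.mul_re]

lemma cf_differentiable {s : ℝ} (hs : 0 < s) {z₀ : ℂ} (hz : 0 < z₀.re) :
    HasDerivAt (fun z : ℂ => ∫ t : ℝ in Ioi (0:ℝ), (t:ℂ) ^ ((s:ℂ) - 1) * Complex.exp (-z * t))
      (∫ t : ℝ in Ioi (0:ℝ), -(t:ℂ) * ((t:ℂ) ^ ((s:ℂ) - 1) * Complex.exp (-z₀ * t))) z₀ := by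
  set F : ℂ → ℝ → ℂ := fun z t => (t:ℂ) ^ ((s:ℂ) - 1) * Complex.exp (-z * t)
  set F' : ℂ → ℝ → ℂ := fun z t => -(t:ℂ) * ((t:ℂ) ^ ((s:ℂ) - 1) * Complex.exp (-z * t))
  have hmeas : ∀ z : ℂ, AEStronglyMeasurable (F z) (volume.restrict (Ioi 0)) := by
    intro z
    refine ContinuousOn.aestronglyMeasurable ?_ measurableSet_Ioi
    exact (contOn_cpow _).mul (Complex.continuous_exp.comp
      ((continuous_const.mul Complex.continuous_ofReal))).continuousOn
  have key := hasDerivAt_integral_of_dominated_loc_of_deriv_le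
    (F := F) (F' := F') (x₀ := z₀)
    (bound := fun t => t ^ ((s + 1) - 1) * Real.exp (-(z₀.re / 2) * t))
    (s := Metric.ball z₀ (z₀.re / 2)) (Metric.ball_mem_nhds _ (by positivity))
    (Eventually.of_forall fun z => hmeas z)
    (integrable_cf hs hz)
    ?_ ?_ ?_ ?_
  · exact key.2
  · -- measurability of F' z₀
    refine ContinuousOn.aestronglyMeasurable ?_ measurableSet_Ioi
    refine ContinuousOn.mul ?_ ?_
    · exact (Complex.continuous_ofReal.neg).continuousOn
    · exact (contOn_cpow _).mul (Complex.continuous_exp.comp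
        ((continuous_const.mul Complex.continuous_ofReal))).continuousOn
  · -- bound
    filter_upwards [ae_restrict_mem measurableSet_Ioi] with t ht
    intro z hz'
    have ht' : (0:ℝ) < t := ht
    have hz2 : z₀.re / 2 ≤ z.re := by
      have h1 : |(z - z₀).re| ≤ ‖z - z₀‖ := Complex.abs_re_le_norm _
      have h2 : ‖z - z₀‖ < z₀.re / 2 := by
        simpa [Complex.dist_eq] using (Metric.mem_ball.mp hz')
      have h3 := (abs_le.mp (h1.trans h2.le)).1
      simp only [Complex.sub_re] at h3
      linarith
    have hb1 : ‖F' z t‖ = t * (t ^ (s - 1) * Real.exp (-(z.re * t))) := by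
      rw [norm_mul, norm_neg, Complex.norm_real, Real.norm_eq_abs, abs_of_pos ht',
        norm_cf_integrand (s := s - 1) ht' _ _ (by simp)]
    rw [hb1, show ((s + 1) - 1 : ℝ) = 1 + (s - 1) by ring, Real.rpow_add ht', Real.rpow_one,
      mul_assoc]
    gcongr
    nlinarith
  · -- bound integrable
    exact integrableOn_rpow_exp (by linarith) (by positivity)
  · -- differentiability
    filter_upwards [ae_restrict_mem measurableSet_Ioi] with t ht
    intro z hz'
    have h1 : HasDerivAt (fun z : ℂ => -z * t) (-(t:ℂ)) z := by
      simpa using ((hasDerivAt_id z).neg.mul_const (t:ℂ))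
    have h2 := h1.cexp
    have := h2.const_mul ((t:ℂ) ^ ((s:ℂ) - 1))
    exact this.congr_deriv (by simp only [F']; ring)

lemma cf_eq {s : ℝ} (hs : 0 < s) {z : ℂ} (hz : 0 < z.re) :
    ∫ t : ℝ in Ioi (0:ℝ), (t:ℂ) ^ ((s:ℂ) - 1) * Complex.exp (-z * t)
      = (Real.Gamma s : ℂ) * z ^ (-(s:ℂ)) := by
  set U : Set ℂ := {w : ℂ | 0 < w.re} with hU
  have hUopen : IsOpen U := isOpen_lt continuous_const Complex.continuous_re
  have hUconn : IsPreconnected U := (convex_halfSpace_re_gt 0).isPreconnected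
  set f : ℂ → ℂ := fun w => ∫ t : ℝ in Ioi (0:ℝ), (t:ℂ) ^ ((s:ℂ) - 1) * Complex.exp (-w * t)
    with hf_def
  set g : ℂ → ℂ := fun w => (Real.Gamma s : ℂ) * w ^ (-(s:ℂ)) with hg_def
  have hf : AnalyticOnNhd ℂ f U := by
    refine DifferentiableOn.analyticOnNhd (fun w hw => ?_) hUopen
    exact (cf_differentiable hs hw).differentiableAt.differentiableWithinAt
  have hg : AnalyticOnNhd ℂ g U := by
    refine DifferentiableOn.analyticOnNhd (fun w hw => ?_) hUopen
    exact ((differentiableAt_id.cpow (differentiableAt_const _) (Or.inl hw)).const_mul _).differentiableWithinAt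
  have hreal : ∀ r : ℝ, 0 < r → f (r:ℂ) = g (r:ℂ) := by
    intro r hr
    have key := Complex.integral_cpow_mul_exp_neg_mul_Ioi (a := (s:ℂ)) (by simpa using hs) hr
    have h1 : f (r:ℂ) = (1 / (r:ℂ)) ^ (s:ℂ) * Complex.Gamma s := by
      rw [hf_def, ← key]
      refine setIntegral_congr_fun measurableSet_Ioi (fun t ht => ?_)
      rw [neg_mul]
    rw [h1, Complex.Gamma_ofReal, hg_def]
    rw [one_div, Complex.inv_cpow _ _ (by
      rw [Complex.arg_ofReal_of_nonneg hr.le]; exact pi_ne_zero.symm), ← Complex.cpow_neg]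
    ring
  have h1U : (1:ℂ) ∈ U := by simp [hU]
  have seq : Tendsto (fun n : ℕ => ((1 + ((n:ℝ)+1)⁻¹ : ℝ) : ℂ)) atTop (𝓝[≠] (1:ℂ)) := by
    rw [tendsto_nhdsWithin_iff]
    constructor
    · have h2 : Tendsto (fun n : ℕ => (1 + ((n:ℝ)+1)⁻¹ : ℝ)) atTop (𝓝 1) := by
        have := tendsto_one_div_add_atTop_nhds_zero_nat (𝕜 := ℝ)
        simpa [one_div] using tendsto_const_nhds.add this
      have h3 := (Complex.continuous_ofReal.tendsto 1).comp h2
      simpa [Function.comp_def] using h3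
    · refine Eventually.of_forall (fun n => ?_)
      simp only [mem_compl_iff, mem_singleton_iff]
      intro h
      have : (1 + ((n:ℝ)+1)⁻¹ : ℝ) = 1 := by exact_mod_cast h
      have hpos : (0:ℝ) < ((n:ℝ)+1)⁻¹ := by positivity
      linarith
  have freq : ∃ᶠ w in 𝓝[≠] (1:ℂ), f w = g w := by
    refine seq.frequently (Frequently.of_forall (fun n => ?_))
    exact hreal _ (by positivity)
  exact hf.eqOn_of_preconnected_of_frequently_eq hg hUconn h1U freq hz

lemma G_eq {s a : ℝ} (hs : 0 < s) (ha : 0 < a) {ε : ℝ} (hε : 0 < ε) :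
    ∫ x in Ioi (0:ℝ), x ^ (s - 1) * Real.exp (-ε * x) * Real.sin (a * x)
      = ((Real.Gamma s : ℂ) * ((ε : ℂ) - a * Complex.I) ^ (-(s:ℂ))).im := by
  have hz : (0:ℝ) < ((ε : ℂ) - (a:ℂ) * Complex.I).re := by simp [hε]
  rw [← cf_eq hs hz]
  rw [show (∫ t : ℝ in Ioi (0:ℝ), (t:ℂ) ^ ((s:ℂ) - 1)
      * Complex.exp (-((ε:ℂ) - (a:ℂ) * Complex.I) * t)).im
    = ∫ t : ℝ in Ioi (0:ℝ), ((t:ℂ) ^ ((s:ℂ) - 1)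
      * Complex.exp (-((ε:ℂ) - (a:ℂ) * Complex.I) * t)).im
    from (integral_im (integrable_cf hs hz)).symm]
  refine setIntegral_congr_fun measurableSet_Ioi fun x hx => ?_
  have hx' : (0:ℝ) < x := hx
  have h1 : ((x:ℂ)) ^ ((s:ℂ) - 1) = Complex.ofReal (x ^ (s - 1)) := by
    rw [Complex.ofReal_cpow hx'.le]; push_cast; ring_nf
  have h2 : -((ε:ℂ) - (a:ℂ) * Complex.I) * (x:ℂ)
      = Complex.ofReal (-(ε * x)) + Complex.ofReal (a * x) * Complex.I := by
    push_cast; ring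
  rw [h1, h2]
  simp [Complex.exp_im, Complex.exp_re, neg_mul]
  ring

lemma value_eq {s a : ℝ} (ha : 0 < a) :
    ((Real.Gamma s : ℂ) * ((0:ℝ) - (a:ℂ) * Complex.I) ^ (-(s:ℂ))).im
      = Real.Gamma s * (a ^ (-s) * Real.sin (s * (π / 2))) := by
  have hz : ((0:ℝ) - (a:ℂ) * Complex.I) ≠ 0 := by
    simp [Complex.ext_iff, ha.ne']
  rw [Complex.cpow_def_of_ne_zero hz]
  have hlog : Complex.log ((0:ℝ) - (a:ℂ) * Complex.I)
      = Complex.ofReal (Real.log a) + Complex.ofReal (-(π/2)) * Complex.I := by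
    rw [show ((0:ℝ) - (a:ℂ) * Complex.I) = (a:ℂ) * (-Complex.I) by push_cast; ring]
    apply Complex.ext
    · rw [Complex.log_re, norm_mul]
      simp [Complex.norm_real, abs_of_pos ha]
    · rw [Complex.log_im, Complex.arg_real_mul _ ha, Complex.arg_neg_I]
      simp
  rw [hlog]
  have h2 : (Complex.ofReal (Real.log a) + Complex.ofReal (-(π/2)) * Complex.I) * (-(s:ℂ))
      = Complex.ofReal (-(s * Real.log a)) + Complex.ofReal (s * (π/2)) * Complex.I := by
    push_cast; ring
  rw [h2]
  simp only [Complex.mul_im, Complex.ofReal_re, Complex.ofReal_im, Complex.exp_im,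
    Complex.exp_re, Complex.add_re, Complex.add_im, Complex.mul_re, Complex.I_re,
    Complex.I_im, mul_zero, mul_one, zero_mul, sub_zero, add_zero, zero_add]
  rw [Real.rpow_def_of_pos ha]
  ring

lemma lim_value {s a : ℝ} (ha : 0 < a) :
    Tendsto (fun ε : ℝ => ((Real.Gamma s : ℂ) * ((ε:ℂ) - (a:ℂ) * Complex.I) ^ (-(s:ℂ))).im)
      (𝓝 0) (𝓝 (Real.Gamma s * (a ^ (-s) * Real.sin (s * (π / 2))))) := by
  rw [show Real.Gamma s * (a ^ (-s) * Real.sin (s * (π / 2)))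
      = ((Real.Gamma s : ℂ) * ((0:ℝ) - (a:ℂ) * Complex.I) ^ (-(s:ℂ))).im from (value_eq ha).symm]
  have hcont : ContinuousAt (fun z : ℂ => ((Real.Gamma s : ℂ) * z ^ (-(s:ℂ))).im)
      (((0:ℝ):ℂ) - (a:ℂ) * Complex.I) := by
    refine Complex.continuous_im.continuousAt.comp ?_
    refine ContinuousAt.mul continuousAt_const ?_
    refine continuousAt_cpow_const ?_
    refine Or.inr ?_
    simp [ha.ne']
  have hbase : ContinuousAt (fun ε : ℝ => ((ε:ℂ) - (a:ℂ) * Complex.I)) 0 :=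
    (Complex.continuous_ofReal.sub continuous_const).continuousAt
  have hc2 := ContinuousAt.comp (g := fun z : ℂ => ((Real.Gamma s : ℂ) * z ^ (-(s:ℂ))).im)
    (f := fun ε : ℝ => ((ε:ℂ) - (a:ℂ) * Complex.I)) hcont hbase
  exact hc2.tendsto

lemma phi_deriv {s ε : ℝ} {x : ℝ} (hx : 0 < x) :
    HasDerivAt (fun y : ℝ => y ^ (s - 1) * Real.exp (-ε * y))
      ((s - 1) * x ^ (s - 1 - 1) * Real.exp (-ε * x)
        + x ^ (s - 1) * (-ε * Real.exp (-ε * x))) x := by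
  have h1 : HasDerivAt (fun y : ℝ => y ^ (s - 1)) ((s - 1) * x ^ (s - 1 - 1)) x :=
    Real.hasDerivAt_rpow_const (Or.inl hx.ne')
  have h2 : HasDerivAt (fun y : ℝ => Real.exp (-ε * y)) (-ε * Real.exp (-ε * x)) x := by
    have h3 := ((hasDerivAt_id x).const_mul (-ε)).exp
    simpa [mul_comm] using h3
  exact h1.mul h2

lemma sin_antideriv {a : ℝ} (ha : a ≠ 0) (x : ℝ) :
    HasDerivAt (fun y : ℝ => -Real.cos (a * y) / a) (Real.sin (a * x)) x := by
  have h := (Real.hasDerivAt_cos (a * x)).comp x ((hasDerivAt_id x).const_mul a)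
  have h2 : HasDerivAt (fun y : ℝ => -Real.cos (a * y) / a) (-(-Real.sin (a * x) * (a * 1)) / a) x :=
    (h.neg).div_const a
  convert h2 using 1
  field_simp

lemma ibp_bound {s a ε : ℝ} (hs1 : s < 1) (ha : 0 < a) (hε : 0 ≤ ε) {T U : ℝ}
    (hT : 0 < T) (hTU : T ≤ U) :
    |∫ x in T..U, x ^ (s - 1) * Real.exp (-ε * x) * Real.sin (a * x)|
      ≤ 3 * T ^ (s - 1) / a := by
  set φ : ℝ → ℝ := fun x => x ^ (s - 1) * Real.exp (-ε * x) with hφ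
  set φ' : ℝ → ℝ := fun x => (s - 1) * x ^ (s - 1 - 1) * Real.exp (-ε * x)
      + x ^ (s - 1) * (-ε * Real.exp (-ε * x)) with hφ'
  set v : ℝ → ℝ := fun x => -Real.cos (a * x) / a with hv
  have hpos : ∀ x ∈ uIcc T U, 0 < x := by
    intro x hx
    rw [uIcc_of_le hTU] at hx
    linarith [hx.1]
  have hderiv : ∀ x ∈ uIcc T U, HasDerivAt φ (φ' x) x := fun x hx => phi_deriv (hpos x hx)
  have hvderiv : ∀ x ∈ uIcc T U, HasDerivAt v (Real.sin (a * x)) x :=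
    fun x _ => sin_antideriv ha.ne' x
  have hcont' : ContinuousOn φ' (uIcc T U) := by
    apply ContinuousOn.add
    · exact (continuousOn_const.mul (continuousOn_id.rpow_const
        (fun x hx => Or.inl (hpos x hx).ne'))).mul
        ((Real.continuous_exp.comp (continuous_const.mul continuous_id)).continuousOn)
    · exact (continuousOn_id.rpow_const (fun x hx => Or.inl (hpos x hx).ne')).mul
        (continuous_const.mul
          (Real.continuous_exp.comp (continuous_const.mul continuous_id))).continuousOn
  have hint' : IntervalIntegrable φ' volume T U := hcont'.intervalIntegrable
  have hintv : IntervalIntegrable (fun x => Real.sin (a * x)) volume T U :=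
    ((Real.continuous_sin.comp (continuous_const.mul continuous_id)).continuousOn).intervalIntegrable
  have ibp := intervalIntegral.integral_mul_deriv_eq_deriv_mul hderiv hvderiv hint' hintv
  -- FTC for φ'
  have ftc : ∫ x in T..U, φ' x = φ U - φ T :=
    intervalIntegral.integral_eq_sub_of_hasDerivAt hderiv hint'
  -- nonneg and bounds
  have hφnonneg : ∀ x, 0 < x → 0 ≤ φ x := fun x hx => by positivity
  have hφ'nonpos : ∀ x ∈ uIcc T U, φ' x ≤ 0 := by
    intro x hx
    have h1 : 0 < x := hpos x hx
    have h2 : (s - 1) * x ^ (s - 1 - 1) * Real.exp (-ε * x) ≤ 0 := by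
      apply mul_nonpos_of_nonpos_of_nonneg
      · apply mul_nonpos_of_nonpos_of_nonneg (by linarith)
        positivity
      · positivity
    have h3 : x ^ (s - 1) * (-ε * Real.exp (-ε * x)) ≤ 0 := by
      apply mul_nonpos_of_nonneg_of_nonpos (by positivity)
      apply mul_nonpos_of_nonpos_of_nonneg (by linarith)
      positivity
    simp only [hφ']
    linarith
  have hvbound : ∀ x, |v x| ≤ 1 / a := by
    intro x
    rw [hv, abs_div, abs_of_pos ha]
    gcongr
    rw [abs_neg]
    exact Real.abs_cos_le_one _
  have hUpos : 0 < U := lt_of_lt_of_le hT hTU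
  have hvcont : ContinuousOn v (uIcc T U) :=
    (((Real.continuous_cos.comp (continuous_const.mul continuous_id)).neg).div_const a).continuousOn
  have hintφ'v : IntervalIntegrable (fun x => φ' x * v x) volume T U :=
    hint'.mul_continuousOn hvcont
  have key2 : |∫ x in T..U, φ' x * v x| ≤ (φ T - φ U) * (1 / a) := by
    refine (intervalIntegral.abs_integral_le_integral_abs hTU).trans ?_
    have hmono : ∫ x in T..U, |φ' x * v x| ≤ ∫ x in T..U, -φ' x * (1 / a) := by
      refine intervalIntegral.integral_mono_on hTU hintφ'v.abs
        ((hint'.neg).mul_const (1 / a)) ?_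
      intro x hx
      have h1 := hφ'nonpos x (by rw [uIcc_of_le hTU]; exact hx)
      rw [abs_mul, abs_of_nonpos h1]
      exact mul_le_mul_of_nonneg_left (hvbound x) (by linarith)
    refine hmono.trans_eq ?_
    rw [show (fun x => -φ' x * (1 / a)) = (fun x => φ' x * (-(1/a))) by funext x; ring]
    rw [intervalIntegral.integral_mul_const, ftc]
    ring
  have e1 : |φ U * v U| ≤ φ U * (1 / a) := by
    rw [abs_mul, abs_of_nonneg (hφnonneg U hUpos)]
    exact mul_le_mul_of_nonneg_left (hvbound U) (hφnonneg U hUpos)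
  have e2 : |φ T * v T| ≤ φ T * (1 / a) := by
    rw [abs_mul, abs_of_nonneg (hφnonneg T hT)]
    exact mul_le_mul_of_nonneg_left (hvbound T) (hφnonneg T hT)
  have hφTle : φ T ≤ T ^ (s - 1) := by
    have h1 : φ T = T ^ (s - 1) * Real.exp (-ε * T) := rfl
    have h2 : Real.exp (-ε * T) ≤ 1 := Real.exp_le_one_iff.mpr (by nlinarith)
    rw [h1]
    nlinarith [Real.rpow_pos_of_pos hT (s - 1)]
  have tri : |φ U * v U - φ T * v T - ∫ x in T..U, φ' x * v x|
      ≤ |φ U * v U| + |φ T * v T| + |∫ x in T..U, φ' x * v x| :=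
    (abs_sub _ _).trans (by gcongr; exact abs_sub _ _)
  have hφUnn := hφnonneg U hUpos
  have ha' : (0:ℝ) ≤ 1 / a := by positivity
  calc |∫ x in T..U, x ^ (s - 1) * Real.exp (-ε * x) * Real.sin (a * x)|
      = |φ U * v U - φ T * v T - ∫ x in T..U, φ' x * v x| := by rw [← ibp]
    _ ≤ |φ U * v U| + |φ T * v T| + |∫ x in T..U, φ' x * v x| := tri
    _ ≤ φ U * (1/a) + φ T * (1/a) + (φ T - φ U) * (1/a) := by linarith
    _ = 2 * φ T * (1/a) := by ring
    _ ≤ 3 * T ^ (s - 1) * (1/a) := by nlinarith [hφnonneg T hT]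
    _ = 3 * T ^ (s - 1) / a := by ring

lemma integrable_G {s a ε : ℝ} (hs : 0 < s) (hε : 0 < ε) :
    IntegrableOn (fun x : ℝ => x ^ (s - 1) * Real.exp (-ε * x) * Real.sin (a * x)) (Ioi 0) := by
  refine (integrableOn_rpow_exp hs hε).mono' ?_ ?_
  · refine ContinuousOn.aestronglyMeasurable ?_ measurableSet_Ioi
    refine ContinuousOn.mul (ContinuousOn.mul ?_ ?_) ?_
    · exact continuousOn_id.rpow_const (fun x hx => Or.inl (ne_of_gt hx))
    · exact (Real.continuous_exp.comp (continuous_const.mul continuous_id)).continuousOn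
    · exact (Real.continuous_sin.comp (continuous_const.mul continuous_id)).continuousOn
  · filter_upwards [ae_restrict_mem measurableSet_Ioi] with x hx
    have hx' : (0:ℝ) < x := hx
    rw [Real.norm_eq_abs, abs_mul, abs_mul, abs_of_nonneg (Real.rpow_nonneg hx'.le _),
      abs_of_nonneg (Real.exp_nonneg _)]
    have h1 : |Real.sin (a * x)| ≤ 1 := Real.abs_sin_le_one _
    nlinarith [Real.rpow_nonneg hx'.le (s-1), Real.exp_nonneg (-ε * x),
      mul_nonneg (Real.rpow_nonneg hx'.le (s-1)) (Real.exp_nonneg (-ε * x))]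

lemma tail_bound {s a ε : ℝ} (hs : 0 < s) (hs1 : s < 1) (ha : 0 < a) (hε : 0 < ε)
    {T : ℝ} (hT : 0 < T) :
    |∫ x in Ioi T, x ^ (s - 1) * Real.exp (-ε * x) * Real.sin (a * x)|
      ≤ 3 * T ^ (s - 1) / a := by
  have hint : IntegrableOn (fun x : ℝ => x ^ (s - 1) * Real.exp (-ε * x) * Real.sin (a * x))
      (Ioi T) := ((integrable_G (a := a) hs hε)).mono_set (Ioi_subset_Ioi hT.le)
  have htd := intervalIntegral_tendsto_integral_Ioi T hint tendsto_id
  refine le_of_tendsto ((continuous_abs.tendsto _).comp htd) ?_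
  exact eventually_atTop.mpr ⟨T, fun U hU => ibp_bound hs1 ha hε.le hT hU⟩

lemma front_bound {s a ε : ℝ} (hs : 0 < s) (hs1 : s < 1) (ha : 0 < a) (hε : 0 ≤ ε)
    {T : ℝ} (hT : 0 < T) :
    |(∫ x in (0:ℝ)..T, x ^ (s - 1) * Real.sin (a * x))
      - ∫ x in (0:ℝ)..T, x ^ (s - 1) * Real.exp (-ε * x) * Real.sin (a * x)|
      ≤ ε * T ^ (s + 1) / (s + 1) := by
  have hsin : ContinuousOn (fun x : ℝ => Real.sin (a * x)) (uIcc 0 T) :=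
    (Real.continuous_sin.comp (continuous_const.mul continuous_id)).continuousOn
  have hexp : ContinuousOn (fun x : ℝ => Real.exp (-ε * x)) (uIcc 0 T) :=
    (Real.continuous_exp.comp (continuous_const.mul continuous_id)).continuousOn
  have hrpow : IntervalIntegrable (fun x : ℝ => x ^ (s - 1)) volume 0 T :=
    intervalIntegral.intervalIntegrable_rpow' (by linarith)
  have hi1 : IntervalIntegrable (fun x : ℝ => x ^ (s - 1) * Real.sin (a * x)) volume 0 T :=
    hrpow.mul_continuousOn hsin
  have hi2 : IntervalIntegrable
      (fun x : ℝ => x ^ (s - 1) * Real.exp (-ε * x) * Real.sin (a * x)) volume 0 T :=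
    (hrpow.mul_continuousOn hexp).mul_continuousOn hsin
  have hi3 : IntervalIntegrable (fun x : ℝ => ε * x ^ s) volume 0 T :=
    (intervalIntegral.intervalIntegrable_rpow' (by linarith)).const_mul ε
  rw [← intervalIntegral.integral_sub hi1 hi2]
  refine (intervalIntegral.abs_integral_le_integral_abs hT.le).trans ?_
  have hmono : (∫ x in (0:ℝ)..T, |x ^ (s - 1) * Real.sin (a * x)
      - x ^ (s - 1) * Real.exp (-ε * x) * Real.sin (a * x)|)
      ≤ ∫ x in (0:ℝ)..T, ε * x ^ s := by
    refine intervalIntegral.integral_mono_on hT.le (hi1.sub hi2).abs hi3 ?_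
    intro x hx
    rcases eq_or_lt_of_le hx.1 with h0 | h0
    · rw [← h0, Real.zero_rpow (by linarith : s - 1 ≠ 0),
        Real.zero_rpow hs.ne']
      simp
    · have hxpos : (0:ℝ) < x := h0
      have hfac : x ^ (s - 1) * Real.sin (a * x)
          - x ^ (s - 1) * Real.exp (-ε * x) * Real.sin (a * x)
          = x ^ (s - 1) * (1 - Real.exp (-ε * x)) * Real.sin (a * x) := by ring
      rw [hfac, abs_mul, abs_mul]
      have h1 : |Real.sin (a * x)| ≤ 1 := Real.abs_sin_le_one _
      have h2 : 0 ≤ 1 - Real.exp (-ε * x) := by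
        have : Real.exp (-ε * x) ≤ 1 := Real.exp_le_one_iff.mpr (by nlinarith)
        linarith
      have h3 : 1 - Real.exp (-ε * x) ≤ ε * x := by
        have h5 := Real.add_one_le_exp (-(ε * x))
        rw [neg_mul]
        linarith
      have h4 : x ^ (s - 1) * x = x ^ s := by
        rw [← Real.rpow_add_one hxpos.ne' (s - 1)]
        norm_num
      rw [abs_of_nonneg (Real.rpow_nonneg hxpos.le _), abs_of_nonneg h2]
      calc x ^ (s - 1) * (1 - Real.exp (-ε * x)) * |Real.sin (a * x)|
          ≤ x ^ (s - 1) * (ε * x) * 1 := by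
            apply mul_le_mul ?_ h1 (abs_nonneg _) (by positivity)
            exact mul_le_mul_of_nonneg_left h3 (Real.rpow_nonneg hxpos.le _)
        _ = ε * x ^ s := by rw [← h4]; ring
  refine hmono.trans_eq ?_
  rw [intervalIntegral.integral_const_mul, integral_rpow (Or.inl (by linarith : (-1:ℝ) < s))]
  rw [Real.zero_rpow (by positivity : s + 1 ≠ 0)]
  ring

end ImproperSinAux

set_option maxHeartbeats 1000000 in
open Real MeasureTheory Filter ImproperSinAux Set Topology in
/-- For `a > 0` and `1 < p < 2`, the improper integral `∫₀^∞ x^(p-2) sin (a x) dx`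
equals `(1/a^(p-1)) * Γ(p) * cos (π p / 2) / (1 - p)`. -/
theorem improper_integral_rpow_sin (a p : ℝ) (ha : 0 < a) (hp1 : 1 < p) (hp2 : p < 2) :
    Tendsto (fun T : ℝ => ∫ x in (0:ℝ)..T, x ^ (p - 2) * Real.sin (a * x)) atTop
      (nhds ((1 / a ^ (p - 1)) * (Real.Gamma p * Real.cos (π * p / 2) / (1 - p)))) := by
  set s : ℝ := p - 1 with hs_def
  have hs : 0 < s := by simp [hs_def]; linarith
  have hs1 : s < 1 := by simp [hs_def]; linarith
  have hp : p = s + 1 := by rw [hs_def]; ring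
  set L : ℝ := Real.Gamma s * (a ^ (-s) * Real.sin (s * (π / 2))) with hL
  -- identify the limit value
  have hRHS : (1 / a ^ (p - 1)) * (Real.Gamma p * Real.cos (π * p / 2) / (1 - p)) = L := by
    have hGamma : Real.Gamma p = s * Real.Gamma s := by
      rw [hp, Real.Gamma_add_one hs.ne']
    have hcos : Real.cos (π * p / 2) = -Real.sin (s * (π / 2)) := by
      rw [show π * p / 2 = s * (π / 2) + π / 2 by rw [hp]; ring, Real.cos_add_pi_div_two]
    have hpow : a ^ (-s) = (a ^ s)⁻¹ := Real.rpow_neg ha.le s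
    have hane : a ^ s ≠ 0 := (Real.rpow_pos_of_pos ha s).ne'
    rw [hGamma, hcos, show p - 1 = s by rw [hs_def],
      show (1:ℝ) - p = -s by rw [hp]; ring, hL, hpow]
    field_simp
  rw [hRHS]
  -- the regularized integral as a function of T
  set H : ℝ → ℝ := fun T =>
    ((Real.Gamma s : ℂ) * ((((T*T)⁻¹ : ℝ) : ℂ) - (a:ℂ) * Complex.I) ^ (-(s:ℂ))).im with hH
  have hεtend : Tendsto (fun T : ℝ => (T*T)⁻¹) atTop (𝓝 0) :=
    (tendsto_id.atTop_mul_atTop₀ tendsto_id).inv_tendsto_atTop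
  have hHt : Tendsto H atTop (𝓝 L) := (lim_value ha).comp hεtend
  -- the distance bound
  have hbound : ∀ᶠ T in atTop,
      dist (∫ x in (0:ℝ)..T, x ^ (p - 2) * Real.sin (a * x)) (H T)
        ≤ (1/(s+1) + 3/a) * T ^ (s - 1) := by
    filter_upwards [eventually_ge_atTop (1:ℝ)] with T hT1
    have hT : (0:ℝ) < T := lt_of_lt_of_le zero_lt_one hT1
    have hεpos : (0:ℝ) < (T*T)⁻¹ := by positivity
    have hG := G_eq (s := s) (a := a) (ε := (T*T)⁻¹) hs ha hεpos
    have hsplit : ∫ x in Ioi (0:ℝ), x ^ (s - 1) * Real.exp (-(T*T)⁻¹ * x) * Real.sin (a * x)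
        = (∫ x in (0:ℝ)..T, x ^ (s - 1) * Real.exp (-(T*T)⁻¹ * x) * Real.sin (a * x))
          + ∫ x in Ioi T, x ^ (s - 1) * Real.exp (-(T*T)⁻¹ * x) * Real.sin (a * x) := by
      rw [intervalIntegral.integral_of_le hT.le, ← Ioc_union_Ioi_eq_Ioi hT.le,
        setIntegral_union (Ioc_disjoint_Ioi le_rfl) measurableSet_Ioi
          ((integrable_G (a := a) hs hεpos).mono_set Ioc_subset_Ioi_self)
          ((integrable_G (a := a) hs hεpos).mono_set (Ioi_subset_Ioi hT.le))]
    have hHT : H T = (∫ x in (0:ℝ)..T, x ^ (s - 1) * Real.exp (-(T*T)⁻¹ * x) * Real.sin (a * x))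
          + ∫ x in Ioi T, x ^ (s - 1) * Real.exp (-(T*T)⁻¹ * x) * Real.sin (a * x) := by
      simp only [hH]
      rw [← hG, hsplit]
    have hfront := front_bound (s := s) (a := a) (ε := (T*T)⁻¹) hs hs1 ha hεpos.le hT
    have htail := tail_bound (s := s) (a := a) (ε := (T*T)⁻¹) hs hs1 ha hεpos hT
    have hps : p - 2 = s - 1 := by rw [hs_def]; ring
    rw [Real.dist_eq, hps, hHT]
    have htri : |(∫ x in (0:ℝ)..T, x ^ (s - 1) * Real.sin (a * x))
        - ((∫ x in (0:ℝ)..T, x ^ (s - 1) * Real.exp (-(T*T)⁻¹ * x) * Real.sin (a * x))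
          + ∫ x in Ioi T, x ^ (s - 1) * Real.exp (-(T*T)⁻¹ * x) * Real.sin (a * x))|
        ≤ |(∫ x in (0:ℝ)..T, x ^ (s - 1) * Real.sin (a * x))
            - ∫ x in (0:ℝ)..T, x ^ (s - 1) * Real.exp (-(T*T)⁻¹ * x) * Real.sin (a * x)|
          + |∫ x in Ioi T, x ^ (s - 1) * Real.exp (-(T*T)⁻¹ * x) * Real.sin (a * x)| := by
      rw [show (∫ x in (0:ℝ)..T, x ^ (s - 1) * Real.sin (a * x))
        - ((∫ x in (0:ℝ)..T, x ^ (s - 1) * Real.exp (-(T*T)⁻¹ * x) * Real.sin (a * x))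
          + ∫ x in Ioi T, x ^ (s - 1) * Real.exp (-(T*T)⁻¹ * x) * Real.sin (a * x))
        = ((∫ x in (0:ℝ)..T, x ^ (s - 1) * Real.sin (a * x))
            - ∫ x in (0:ℝ)..T, x ^ (s - 1) * Real.exp (-(T*T)⁻¹ * x) * Real.sin (a * x))
          - ∫ x in Ioi T, x ^ (s - 1) * Real.exp (-(T*T)⁻¹ * x) * Real.sin (a * x) by ring]
      exact abs_sub _ _
    have hTpow : (T*T)⁻¹ * T ^ (s + 1) = T ^ (s - 1) := by
      have h2 : T ^ (s + 1) = T ^ (s - 1) * (T ^ (2:ℝ)) := by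
        rw [← Real.rpow_add hT]
        congr 1
        ring
      have h3 : T ^ (2:ℝ) = T * T := by
        rw [show (2:ℝ) = (1:ℝ) + 1 by norm_num, Real.rpow_add hT, Real.rpow_one]
      rw [h2, h3]
      field_simp
    calc |(∫ x in (0:ℝ)..T, x ^ (s - 1) * Real.sin (a * x))
        - ((∫ x in (0:ℝ)..T, x ^ (s - 1) * Real.exp (-(T*T)⁻¹ * x) * Real.sin (a * x))
          + ∫ x in Ioi T, x ^ (s - 1) * Real.exp (-(T*T)⁻¹ * x) * Real.sin (a * x))|
        ≤ |(∫ x in (0:ℝ)..T, x ^ (s - 1) * Real.sin (a * x))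
            - ∫ x in (0:ℝ)..T, x ^ (s - 1) * Real.exp (-(T*T)⁻¹ * x) * Real.sin (a * x)|
          + |∫ x in Ioi T, x ^ (s - 1) * Real.exp (-(T*T)⁻¹ * x) * Real.sin (a * x)| := htri
      _ ≤ (T*T)⁻¹ * T ^ (s + 1) / (s + 1) + 3 * T ^ (s - 1) / a := add_le_add hfront htail
      _ = (1/(s+1) + 3/a) * T ^ (s - 1) := by rw [hTpow]; ring
  -- squeeze
  have hdist : Tendsto (fun T : ℝ =>
      dist (∫ x in (0:ℝ)..T, x ^ (p - 2) * Real.sin (a * x)) (H T)) atTop (𝓝 0) := by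
    have hb2 : Tendsto (fun T : ℝ => (1/(s+1) + 3/a) * T ^ (s - 1)) atTop (𝓝 0) := by
      have h8 := (tendsto_rpow_neg_atTop (by linarith : (0:ℝ) < 1 - s)).const_mul
        (1/(s+1) + 3/a)
      rw [mul_zero] at h8
      refine h8.congr (fun T => ?_)
      rw [show -(1 - s) = s - 1 by ring]
    exact squeeze_zero' (Eventually.of_forall fun T => dist_nonneg) hbound hb2
  refine hHt.congr_dist ?_
  simpa [dist_comm] using hdist
end

section
/- For 1 < p < 2, ∫₀^∞ x^(p-2) sin(x) dx = (1/p) · Γ(1 - p/2) Γ(1 + p/2) / Γ(2-p). -/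
open Real MeasureTheory Filter

section aux
open Set

variable {p : ℝ}

private lemma laplace_sin' (t T : ℝ) :
    ∫ x in (0:ℝ)..T, Real.exp (-(t*x)) * Real.sin x
      = (1 - Real.exp (-(t*T)) * (Real.cos T + t * Real.sin T)) / (1 + t^2) := by
  have ht : (1:ℝ) + t^2 ≠ 0 := by positivity
  have key : ∀ x : ℝ, HasDerivAt
      (fun x => (1 - Real.exp (-(t*x)) * (Real.cos x + t * Real.sin x)) / (1 + t^2))
      (Real.exp (-(t*x)) * Real.sin x) x := by
    intro x
    have h1 : HasDerivAt (fun x : ℝ => -(t*x)) (-t) x := by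
      exact (((hasDerivAt_id x).const_mul t).neg).congr_deriv (by simp)
    have h2 : HasDerivAt (fun x : ℝ => Real.exp (-(t*x))) (Real.exp (-(t*x)) * (-t)) x := h1.exp
    have h3 : HasDerivAt (fun x : ℝ => Real.cos x + t * Real.sin x)
        (-Real.sin x + t * Real.cos x) x :=
      (Real.hasDerivAt_cos x).add ((Real.hasDerivAt_sin x).const_mul t)
    have h4 := ((h2.mul h3).const_sub 1).div_const (1 + t^2)
    refine h4.congr_deriv ?_
    rw [div_eq_iff ht]
    ring
  rw [intervalIntegral.integral_eq_sub_of_hasDerivAt (fun x _ => key x)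
    (Continuous.intervalIntegrable (by continuity) _ _)]
  simp

private lemma kernel_rep' (hp2 : p < 2) {x : ℝ} (hx : 0 < x) :
    ∫ t in Ioi (0:ℝ), t ^ (1-p) * Real.exp (-(x*t)) = Real.Gamma (2-p) * x ^ (p-2) := by
  have h := integral_rpow_mul_exp_neg_mul_Ioi (a := 2-p) (r := x) (by linarith) hx
  have h2 : (2:ℝ) - p - 1 = 1 - p := by ring
  rw [h2] at h
  rw [h, one_div, ← Real.rpow_neg_one x, ← Real.rpow_mul hx.le, mul_comm]
  norm_num

private lemma integrandInt' {q : ℝ} (hq : -1 < q) {b : ℝ} (hb : 0 < b) :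
    IntegrableOn (fun t : ℝ => t ^ q * Real.exp (-(b*t))) (Ioi 0) := by
  have := integrableOn_rpow_mul_exp_neg_mul_rpow (p := 1) (s := q) hq one_pos hb
  refine this.congr_fun (fun t ht => ?_) measurableSet_Ioi
  beta_reduce; rw [Real.rpow_one]; ring_nf

private lemma intOneAdd' (hp1 : 1 < p) (hp2 : p < 2) :
    IntegrableOn (fun t : ℝ => t ^ (1-p) / (1 + t^2)) (Ioi 0) := by
  have hmeas : Measurable (fun t : ℝ => t ^ (1-p) / (1 + t^2)) := by fun_prop
  have h1 : IntegrableOn (fun t : ℝ => t ^ (1-p) / (1 + t^2)) (Ioc 0 1) := by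
    have hi : IntegrableOn (fun t : ℝ => t ^ (1-p)) (Ioc 0 1) := by
      have := intervalIntegral.intervalIntegrable_rpow' (a := 0) (b := 1) (r := 1-p)
        (by linarith)
      rwa [intervalIntegrable_iff_integrableOn_Ioc_of_le zero_le_one] at this
    refine hi.mono' hmeas.aestronglyMeasurable ?_
    filter_upwards [ae_restrict_mem measurableSet_Ioc] with t ht
    have h0 : (0:ℝ) < t ^ (1-p) := Real.rpow_pos_of_pos ht.1 _
    rw [Real.norm_eq_abs, abs_div, abs_of_pos h0, abs_of_pos (by positivity)]
    rw [div_le_iff₀ (by positivity)]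
    nlinarith [sq_nonneg t]
  have h2 : IntegrableOn (fun t : ℝ => t ^ (1-p) / (1 + t^2)) (Ioi 1) := by
    have hi : IntegrableOn (fun t : ℝ => t ^ (-1-p)) (Ioi 1) :=
      integrableOn_Ioi_rpow_of_lt (by linarith) one_pos
    refine hi.mono' hmeas.aestronglyMeasurable ?_
    filter_upwards [ae_restrict_mem measurableSet_Ioi] with t ht
    have ht0 : (0:ℝ) < t := lt_trans one_pos ht
    have h0 : (0:ℝ) < t ^ (1-p) := Real.rpow_pos_of_pos ht0 _
    rw [Real.norm_eq_abs, abs_div, abs_of_pos h0, abs_of_pos (by positivity)]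
    rw [div_le_iff₀ (by positivity), show (-1:ℝ)-p = (1-p) + (-2) by ring,
      Real.rpow_add ht0, Real.rpow_neg ht0.le, ← Real.rpow_natCast t 2]
    norm_num
    rw [mul_assoc]
    refine le_mul_of_one_le_right h0.le ?_
    rw [inv_mul_eq_div, le_div_iff₀ (by positivity)]
    nlinarith [sq_nonneg t]
  have := h1.union h2
  rwa [Ioc_union_Ioi_eq_Ioi zero_le_one] at this

private lemma prod_int1 (hp1 : 1 < p) (hp2 : p < 2) {T : ℝ} (hT : 0 < T) :
    Integrable (fun q : ℝ × ℝ => q.2 ^ (1-p) * Real.exp (-(q.1*q.2)) * Real.sin q.1)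
      ((volume.restrict (Ioc (0:ℝ) T)).prod (volume.restrict (Ioi (0:ℝ)))) := by
  have hG : 0 < Real.Gamma (2-p) := Real.Gamma_pos_of_pos (by linarith)
  have hmeas : AEStronglyMeasurable
      (fun q : ℝ × ℝ => q.2 ^ (1-p) * Real.exp (-(q.1*q.2)) * Real.sin q.1)
      ((volume.restrict (Ioc (0:ℝ) T)).prod (volume.restrict (Ioi (0:ℝ)))) := by
    apply Measurable.aestronglyMeasurable
    fun_prop
  rw [MeasureTheory.integrable_prod_iff hmeas]
  constructor
  · filter_upwards [ae_restrict_mem measurableSet_Ioc] with x hx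
    exact (integrandInt' (by linarith) hx.1).mul_const _
  · have key : ∀ x ∈ Ioc (0:ℝ) T,
        (∫ t in Ioi (0:ℝ), ‖t ^ (1-p) * Real.exp (-(x*t)) * Real.sin x‖)
          = Real.Gamma (2-p) * x ^ (p-2) * |Real.sin x| := by
      intro x hx
      have hcg : ∀ t ∈ Ioi (0:ℝ), ‖t ^ (1-p) * Real.exp (-(x*t)) * Real.sin x‖
          = t ^ (1-p) * Real.exp (-(x*t)) * |Real.sin x| := by
        intro t ht
        have h0 : (0:ℝ) ≤ t ^ (1-p) := (Real.rpow_pos_of_pos ht _).le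
        simp [Real.norm_eq_abs, abs_mul, abs_of_nonneg h0, abs_of_nonneg (Real.exp_pos _).le]
      rw [setIntegral_congr_fun measurableSet_Ioi hcg, integral_mul_const,
        kernel_rep' hp2 hx.1]
    refine Integrable.mono' (g := fun x => Real.Gamma (2-p) * x ^ (p-1)) ?_ ?_ ?_
    · have h := intervalIntegral.intervalIntegrable_rpow' (a := 0) (b := T) (r := p-1)
        (by linarith)
      rw [intervalIntegrable_iff_integrableOn_Ioc_of_le hT.le] at h
      exact h.const_mul _
    · exact (hmeas.norm).integral_prod_right'
    · filter_upwards [ae_restrict_mem measurableSet_Ioc] with x hx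
      rw [Real.norm_eq_abs, abs_of_nonneg (integral_nonneg (fun t => norm_nonneg _)),
        key x hx]
      have h1 : |Real.sin x| ≤ x := (Real.abs_sin_le_abs).trans (le_of_eq (abs_of_pos hx.1))
      calc Real.Gamma (2-p) * x ^ (p-2) * |Real.sin x|
          ≤ Real.Gamma (2-p) * x ^ (p-2) * x :=
            mul_le_mul_of_nonneg_left h1 (mul_nonneg hG.le (Real.rpow_pos_of_pos hx.1 _).le)
        _ = Real.Gamma (2-p) * x ^ (p-1) := by
            rw [mul_assoc, ← Real.rpow_add_one (ne_of_gt hx.1)]; ring_nf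

private lemma fubini_step' (hp1 : 1 < p) (hp2 : p < 2) {T : ℝ} (hT : 0 < T) :
    ∫ x in (0:ℝ)..T, x ^ (p-2) * Real.sin x
      = (Real.Gamma (2-p))⁻¹ * ∫ t in Ioi (0:ℝ), t ^ (1-p) *
          ((1 - Real.exp (-(t*T)) * (Real.cos T + t * Real.sin T)) / (1 + t^2)) := by
  have hG : 0 < Real.Gamma (2-p) := Real.Gamma_pos_of_pos (by linarith)
  have swap := MeasureTheory.integral_integral_swap
    (f := fun x t => t ^ (1-p) * Real.exp (-(x*t)) * Real.sin x)
    (μ := volume.restrict (Ioc (0:ℝ) T)) (ν := volume.restrict (Ioi (0:ℝ)))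
    (prod_int1 hp1 hp2 hT)
  rw [intervalIntegral.integral_of_le hT.le]
  have lhs_eq : (∫ x in Ioc (0:ℝ) T, x ^ (p-2) * Real.sin x)
      = (Real.Gamma (2-p))⁻¹ * ∫ x in Ioc (0:ℝ) T,
          ∫ t in Ioi (0:ℝ), t ^ (1-p) * Real.exp (-(x*t)) * Real.sin x := by
    rw [← integral_const_mul]
    refine setIntegral_congr_fun measurableSet_Ioc (fun x hx => ?_)
    have h2 : (∫ t in Ioi (0:ℝ), t ^ (1-p) * Real.exp (-(x*t)) * Real.sin x)
        = (∫ t in Ioi (0:ℝ), t ^ (1-p) * Real.exp (-(x*t))) * Real.sin x :=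
      integral_mul_const _ _
    rw [h2, kernel_rep' hp2 hx.1]
    field_simp
  have rhs_eq : ∀ t ∈ Ioi (0:ℝ),
      (∫ x in Ioc (0:ℝ) T, t ^ (1-p) * Real.exp (-(x*t)) * Real.sin x)
      = t ^ (1-p) * ((1 - Real.exp (-(t*T)) * (Real.cos T + t * Real.sin T)) / (1 + t^2)) := by
    intro t ht
    have h3 : (∫ x in Ioc (0:ℝ) T, t ^ (1-p) * Real.exp (-(x*t)) * Real.sin x)
        = t ^ (1-p) * ∫ x in Ioc (0:ℝ) T, Real.exp (-(t*x)) * Real.sin x := by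
      rw [← integral_const_mul]
      refine setIntegral_congr_fun measurableSet_Ioc (fun x hx => ?_)
      rw [mul_comm x t]; ring
    rw [h3, ← intervalIntegral.integral_of_le hT.le, laplace_sin' t T]
  rw [lhs_eq, swap, setIntegral_congr_fun measurableSet_Ioi rhs_eq]

private lemma exp_neg_int {c : ℝ} (hc : 0 < c) :
    ∫ y in Ioi (0:ℝ), Real.exp (-(c*y)) = 1/c := by
  have h := integral_rpow_mul_exp_neg_mul_Ioi (a := 1) (r := c) one_pos hc
  simp only [sub_self, Real.rpow_zero, one_mul, Real.rpow_one, Real.Gamma_one, mul_one] at h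
  exact h

private lemma prod_int2 (hp1 : 1 < p) (hp2 : p < 2) :
    Integrable (fun q : ℝ × ℝ => q.1 ^ (1-p) * Real.exp (-((1+q.1^2) * q.2)))
      ((volume.restrict (Ioi (0:ℝ))).prod (volume.restrict (Ioi (0:ℝ)))) := by
  have hmeas : AEStronglyMeasurable
      (fun q : ℝ × ℝ => q.1 ^ (1-p) * Real.exp (-((1+q.1^2) * q.2)))
      ((volume.restrict (Ioi (0:ℝ))).prod (volume.restrict (Ioi (0:ℝ)))) := by
    apply Measurable.aestronglyMeasurable
    fun_prop
  rw [MeasureTheory.integrable_prod_iff hmeas]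
  constructor
  · filter_upwards [ae_restrict_mem measurableSet_Ioi] with t ht
    have hc : (0:ℝ) < 1 + t^2 := by positivity
    have h := (exp_neg_integrableOn_Ioi (0:ℝ) hc).const_mul (t ^ (1-p))
    simp_rw [neg_mul] at h
    exact h
  · refine ((intOneAdd' hp1 hp2).congr ?_)
    filter_upwards [ae_restrict_mem measurableSet_Ioi] with t ht
    have hc : (0:ℝ) < 1 + t^2 := by positivity
    have h0 : (0:ℝ) ≤ t ^ (1-p) := (Real.rpow_pos_of_pos ht _).le
    have hcg : ∀ y ∈ Ioi (0:ℝ), ‖t ^ (1-p) * Real.exp (-((1+t^2)*y))‖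
        = t ^ (1-p) * Real.exp (-((1+t^2)*y)) := by
      intro y _
      rw [Real.norm_eq_abs, abs_mul, abs_of_nonneg h0, abs_of_nonneg (Real.exp_pos _).le]
    rw [setIntegral_congr_fun measurableSet_Ioi hcg, integral_const_mul, exp_neg_int hc,
      mul_one_div]

private lemma I_val (hp1 : 1 < p) (hp2 : p < 2) :
    ∫ t in Ioi (0:ℝ), t ^ (1-p) / (1 + t^2)
      = (1/2) * Real.Gamma (1-p/2) * Real.Gamma (p/2) := by
  have swap := MeasureTheory.integral_integral_swap
    (f := fun t y => t ^ (1-p) * Real.exp (-((1+t^2) * y)))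
    (μ := volume.restrict (Ioi (0:ℝ))) (ν := volume.restrict (Ioi (0:ℝ)))
    (prod_int2 hp1 hp2)
  have two_eq : ∀ t : ℝ, t ^ (2:ℝ) = t^2 := fun t => by
    rw [show (2:ℝ) = ((2:ℕ):ℝ) by norm_num, Real.rpow_natCast]
  have step1 : (∫ t in Ioi (0:ℝ), t ^ (1-p) / (1 + t^2))
      = ∫ t in Ioi (0:ℝ), ∫ y in Ioi (0:ℝ), t ^ (1-p) * Real.exp (-((1+t^2) * y)) := by
    refine setIntegral_congr_fun measurableSet_Ioi (fun t ht => ?_)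
    have hc : (0:ℝ) < 1 + t^2 := by positivity
    rw [integral_const_mul, exp_neg_int hc, mul_one_div]
  have step2 : ∀ y ∈ Ioi (0:ℝ),
      (∫ t in Ioi (0:ℝ), t ^ (1-p) * Real.exp (-((1+t^2) * y)))
        = Real.exp (-y) * y ^ ((p-2)/2) * ((1/2) * Real.Gamma (1-p/2)) := by
    intro y hy
    have hy0 : (0:ℝ) < y := hy
    have hin : (∫ t in Ioi (0:ℝ), t ^ (1-p) * Real.exp (-((1+t^2) * y)))
        = Real.exp (-y) * ∫ t in Ioi (0:ℝ), t ^ (1-p) * Real.exp (-y * t ^ (2:ℝ)) := by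
      rw [← integral_const_mul]
      refine setIntegral_congr_fun measurableSet_Ioi (fun t _ => ?_)
      rw [two_eq, show -((1+t^2)*y) = -y + -y*t^2 by ring, Real.exp_add]
      ring
    rw [hin, integral_rpow_mul_exp_neg_mul_rpow two_pos (by linarith) hy0]
    rw [show -(1-p+1)/2 = (p-2)/2 by ring, show (1-p+1)/2 = 1-p/2 by ring]
    ring
  have step3 : (∫ y in Ioi (0:ℝ),
        Real.exp (-y) * y ^ ((p-2)/2) * ((1/2) * Real.Gamma (1-p/2)))
      = (1/2) * Real.Gamma (1-p/2) * Real.Gamma (p/2) := by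
    rw [integral_mul_const]
    have h := integral_rpow_mul_exp_neg_mul_Ioi (a := p/2) (r := 1) (by linarith) one_pos
    have hcg : ∀ y ∈ Ioi (0:ℝ), Real.exp (-y) * y ^ ((p-2)/2)
        = y ^ (p/2-1) * Real.exp (-(1*y)) := by
      intro y _
      rw [one_mul, show (p-2)/2 = p/2-1 by ring, mul_comm]
    rw [setIntegral_congr_fun measurableSet_Ioi hcg, h]
    simp [Real.one_rpow]
    ring
  rw [step1, swap, setIntegral_congr_fun measurableSet_Ioi step2, step3]

private lemma g2_norm_le (hp1 : 1 < p) {T : ℝ} (hT : 0 < T) :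
    ∀ t ∈ Ioi (0:ℝ),
      ‖t ^ (1-p) * (Real.exp (-(t*T)) * (Real.cos T + t * Real.sin T) / (1 + t^2))‖
        ≤ t ^ (1-p) * Real.exp (-(T*t)) + t ^ (2-p) * Real.exp (-(T*t)) := by
  intro t ht
  have ht0 : (0:ℝ) < t := ht
  have h0 : (0:ℝ) < t ^ (1-p) := Real.rpow_pos_of_pos ht0 _
  have habs : |Real.cos T + t * Real.sin T| ≤ 1 + t := by
    refine (abs_add_le _ _).trans (add_le_add (Real.abs_cos_le_one T) ?_)
    rw [abs_mul, abs_of_pos ht0]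
    calc t * |Real.sin T| ≤ t * 1 :=
          mul_le_mul_of_nonneg_left (Real.abs_sin_le_one T) ht0.le
      _ = t := mul_one t
  rw [Real.norm_eq_abs, abs_mul, abs_of_pos h0, abs_div, abs_mul,
    abs_of_pos (Real.exp_pos _), abs_of_pos (show (0:ℝ) < 1 + t^2 by positivity)]
  have hstep : Real.exp (-(t*T)) * |Real.cos T + t * Real.sin T| / (1 + t^2)
      ≤ Real.exp (-(t*T)) * (1 + t) := by
    rw [div_le_iff₀ (by positivity)]
    have h1 : Real.exp (-(t*T)) * |Real.cos T + t * Real.sin T|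
        ≤ Real.exp (-(t*T)) * (1 + t) :=
      mul_le_mul_of_nonneg_left habs (Real.exp_pos _).le
    nlinarith [sq_nonneg t, mul_nonneg (Real.exp_pos (-(t*T))).le (by linarith : (0:ℝ) ≤ 1+t)]
  calc t ^ (1-p) * (Real.exp (-(t*T)) * |Real.cos T + t * Real.sin T| / (1 + t^2))
      ≤ t ^ (1-p) * (Real.exp (-(t*T)) * (1 + t)) :=
        mul_le_mul_of_nonneg_left hstep h0.le
    _ = t ^ (1-p) * Real.exp (-(T*t)) + t ^ (2-p) * Real.exp (-(T*t)) := by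
        rw [show (2:ℝ)-p = (1-p)+1 by ring, Real.rpow_add_one (ne_of_gt ht0), mul_comm T t]
        ring

private lemma g2_int (hp1 : 1 < p) (hp2 : p < 2) {T : ℝ} (hT : 0 < T) :
    IntegrableOn (fun t : ℝ =>
      t ^ (1-p) * (Real.exp (-(t*T)) * (Real.cos T + t * Real.sin T) / (1 + t^2))) (Ioi 0) := by
  have hbint : IntegrableOn (fun t : ℝ =>
      t ^ (1-p) * Real.exp (-(T*t)) + t ^ (2-p) * Real.exp (-(T*t))) (Ioi 0) :=
    (integrandInt' (by linarith) hT).add (integrandInt' (by linarith) hT)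
  refine hbint.mono' (Measurable.aestronglyMeasurable (by fun_prop)) ?_
  filter_upwards [ae_restrict_mem measurableSet_Ioi] with t ht
  exact g2_norm_le hp1 hT t ht

private lemma E_bound (hp1 : 1 < p) (hp2 : p < 2) {T : ℝ} (hT : 0 < T) :
    ‖∫ t in Ioi (0:ℝ),
        t ^ (1-p) * (Real.exp (-(t*T)) * (Real.cos T + t * Real.sin T) / (1 + t^2))‖
      ≤ (1/T) ^ (2-p) * Real.Gamma (2-p) + (1/T) ^ (3-p) * Real.Gamma (3-p) := by
  have i1 : IntegrableOn (fun t : ℝ => t ^ (1-p) * Real.exp (-(T*t))) (Ioi 0) :=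
    integrandInt' (by linarith) hT
  have i2 : IntegrableOn (fun t : ℝ => t ^ (2-p) * Real.exp (-(T*t))) (Ioi 0) :=
    integrandInt' (by linarith) hT
  have hae : ∀ᵐ t ∂(volume.restrict (Ioi (0:ℝ))),
      ‖t ^ (1-p) * (Real.exp (-(t*T)) * (Real.cos T + t * Real.sin T) / (1 + t^2))‖
        ≤ t ^ (1-p) * Real.exp (-(T*t)) + t ^ (2-p) * Real.exp (-(T*t)) := by
    filter_upwards [ae_restrict_mem measurableSet_Ioi] with t ht
    exact g2_norm_le hp1 hT t ht
  have h := norm_integral_le_of_norm_le (i1.add i2) hae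
  refine h.trans (le_of_eq ?_)
  simp only [Pi.add_apply]
  rw [integral_add i1 i2]
  have e1 := integral_rpow_mul_exp_neg_mul_Ioi (a := 2-p) (r := T) (by linarith) hT
  rw [show (2:ℝ)-p-1 = 1-p by ring] at e1
  have e2 := integral_rpow_mul_exp_neg_mul_Ioi (a := 3-p) (r := T) (by linarith) hT
  rw [show (3:ℝ)-p-1 = 2-p by ring] at e2
  rw [e1, e2]

end aux

/-- For `1 < p < 2`, `∫₀^∞ x^(p-2) sin x dx = (1/p) Γ(1 - p/2) Γ(1 + p/2) / Γ(2 - p)`. -/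
theorem improper_integral_rpow_sin_gamma (p : ℝ) (hp1 : 1 < p) (hp2 : p < 2) :
    Tendsto (fun T : ℝ => ∫ x in (0:ℝ)..T, x ^ (p - 2) * Real.sin x) atTop
      (nhds ((1 / p) * (Real.Gamma (1 - p / 2) * Real.Gamma (1 + p / 2) / Real.Gamma (2 - p)))) := by
  have hG : 0 < Real.Gamma (2-p) := Real.Gamma_pos_of_pos (by linarith)
  have hsplit : ∀ T : ℝ, 0 < T → (∫ x in (0:ℝ)..T, x ^ (p-2) * Real.sin x)
      = (Real.Gamma (2-p))⁻¹ * ((∫ t in Set.Ioi (0:ℝ), t ^ (1-p) / (1 + t^2))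
          - ∫ t in Set.Ioi (0:ℝ),
              t ^ (1-p) * (Real.exp (-(t*T)) * (Real.cos T + t * Real.sin T) / (1 + t^2))) := by
    intro T hT
    rw [fubini_step' hp1 hp2 hT, ← MeasureTheory.integral_sub (intOneAdd' hp1 hp2)
      (g2_int hp1 hp2 hT)]
    congr 1
    refine MeasureTheory.setIntegral_congr_fun measurableSet_Ioi (fun t ht => ?_)
    ring
  have hElim : Tendsto (fun T : ℝ => ∫ t in Set.Ioi (0:ℝ),
      t ^ (1-p) * (Real.exp (-(t*T)) * (Real.cos T + t * Real.sin T) / (1 + t^2))) atTop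
      (nhds 0) := by
    apply squeeze_zero_norm' (a := fun T : ℝ =>
      (1/T) ^ (2-p) * Real.Gamma (2-p) + (1/T) ^ (3-p) * Real.Gamma (3-p))
    · filter_upwards [eventually_gt_atTop 0] with T hT using E_bound hp1 hp2 hT
    · have l1 : Tendsto (fun T : ℝ => (1/T) ^ (2-p)) atTop (nhds 0) := by
        refine (tendsto_rpow_neg_atTop (y := 2-p) (by linarith)).congr' ?_
        filter_upwards [eventually_gt_atTop 0] with T hT
        rw [one_div, Real.inv_rpow hT.le, ← Real.rpow_neg hT.le]
      have l2 : Tendsto (fun T : ℝ => (1/T) ^ (3-p)) atTop (nhds 0) := by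
        refine (tendsto_rpow_neg_atTop (y := 3-p) (by linarith)).congr' ?_
        filter_upwards [eventually_gt_atTop 0] with T hT
        rw [one_div, Real.inv_rpow hT.le, ← Real.rpow_neg hT.le]
      simpa using (l1.mul_const (Real.Gamma (2-p))).add (l2.mul_const (Real.Gamma (3-p)))
  have hlim : Tendsto (fun T : ℝ => (Real.Gamma (2-p))⁻¹ *
      ((∫ t in Set.Ioi (0:ℝ), t ^ (1-p) / (1 + t^2))
        - ∫ t in Set.Ioi (0:ℝ),
            t ^ (1-p) * (Real.exp (-(t*T)) * (Real.cos T + t * Real.sin T) / (1 + t^2)))) atTop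
      (nhds ((Real.Gamma (2-p))⁻¹ *
        ((∫ t in Set.Ioi (0:ℝ), t ^ (1-p) / (1 + t^2)) - 0))) :=
    (tendsto_const_nhds.sub hElim).const_mul _
  have heq : (fun T : ℝ => (Real.Gamma (2-p))⁻¹ *
      ((∫ t in Set.Ioi (0:ℝ), t ^ (1-p) / (1 + t^2))
        - ∫ t in Set.Ioi (0:ℝ),
            t ^ (1-p) * (Real.exp (-(t*T)) * (Real.cos T + t * Real.sin T) / (1 + t^2))))
      =ᶠ[atTop] (fun T : ℝ => ∫ x in (0:ℝ)..T, x ^ (p-2) * Real.sin x) := by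
    filter_upwards [eventually_gt_atTop 0] with T hT using (hsplit T hT).symm
  have hval : (Real.Gamma (2-p))⁻¹ *
      ((∫ t in Set.Ioi (0:ℝ), t ^ (1-p) / (1 + t^2)) - 0)
      = (1 / p) * (Real.Gamma (1 - p / 2) * Real.Gamma (1 + p / 2) / Real.Gamma (2 - p)) := by
    have hp0 : p ≠ 0 := by linarith
    have hhalf : p / 2 ≠ 0 := by
      intro h; apply hp0; linarith [h]
    rw [sub_zero, I_val hp1 hp2, show (1:ℝ)+p/2 = p/2+1 by ring,
      Real.Gamma_add_one hhalf]
    field_simp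
  rw [← hval]
  exact hlim.congr' heq
end

section
/- Let f be a bounded non-negative measurable function on [0,∞) with M_p(f) := (p/‖f‖_∞) ∫₀^∞ f(r) r^{p-1} dr finite and positive for p in some interval. Then p ↦ (M_p(f))^{1/p} is non-decreasing on {p > 0 : 0 < M_p(f) < ∞}. -/
open Real MeasureTheory

/-- Milman–Pajor lemma: for a bounded non-negative measurable `f` on `(0,∞)` with
`M_p(f) = (p/‖f‖_∞) ∫₀^∞ f(r) r^(p-1) dr`, the map `p ↦ M_p(f)^(1/p)` is non-decreasing
on the set of `p > 0` where `M_p(f)` is finite and positive. -/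
theorem milman_pajor_monotone (f : ℝ → ℝ) (hf : Measurable f) (hf0 : ∀ r, 0 ≤ f r)
    (C : ℝ) (hbdd : ∀ r, f r ≤ C)
    (F : ℝ) (hF : F = essSup f (volume.restrict (Set.Ioi (0:ℝ))))
    (p q : ℝ) (hp : 0 < p) (hq : 0 < q) (hpq : p ≤ q)
    (hip : IntegrableOn (fun r => f r * r ^ (p - 1)) (Set.Ioi (0:ℝ)))
    (hiq : IntegrableOn (fun r => f r * r ^ (q - 1)) (Set.Ioi (0:ℝ)))
    (hMp : 0 < (p / F) * ∫ r in Set.Ioi (0:ℝ), f r * r ^ (p - 1))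
    (hMq : 0 < (q / F) * ∫ r in Set.Ioi (0:ℝ), f r * r ^ (q - 1)) :
    ((p / F) * ∫ r in Set.Ioi (0:ℝ), f r * r ^ (p - 1)) ^ (1 / p)
      ≤ ((q / F) * ∫ r in Set.Ioi (0:ℝ), f r * r ^ (q - 1)) ^ (1 / q) := by
  -- notation
  set Ip := ∫ r in Set.Ioi (0:ℝ), f r * r ^ (p - 1) with hIpdef
  set Iq := ∫ r in Set.Ioi (0:ℝ), f r * r ^ (q - 1) with hIqdef
  -- a.e. bound f ≤ F on (0,∞)
  have hfae : ∀ᵐ r ∂(volume.restrict (Set.Ioi (0:ℝ))), f r ≤ F := by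
    rw [hF]
    have hb : Filter.IsBoundedUnder (· ≤ ·) (ae (volume.restrict (Set.Ioi (0:ℝ)))) f :=
      Filter.isBoundedUnder_of ⟨C, fun r => hbdd r⟩
    exact ae_le_essSup hb
  -- nonnegativity of Ip
  have hIp0 : 0 ≤ Ip :=
    setIntegral_nonneg measurableSet_Ioi fun r hr =>
      mul_nonneg (hf0 r) (Real.rpow_nonneg (le_of_lt hr) _)
  -- F > 0
  have hFpos : 0 < F := by
    by_contra h
    push_neg at h
    have h1 : p / F ≤ 0 := div_nonpos_of_nonneg_of_nonpos hp.le h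
    nlinarith [hMp]
  have hPF : 0 < p / F := div_pos hp hFpos
  have hQF : 0 < q / F := div_pos hq hFpos
  have hIppos : 0 < Ip := by
    by_contra h
    push_neg at h
    nlinarith [hMp, hPF]
  -- the comparison radius a
  set a : ℝ := ((p / F) * Ip) ^ (1 / p) with hadef
  have ha : 0 < a := Real.rpow_pos_of_pos hMp _
  have ha_pow : a ^ p = (p / F) * Ip := by
    rw [hadef, one_div]
    exact Real.rpow_inv_rpow hMp.le hp.ne'
  -- integral of r^(s-1) on Ioc 0 a
  have key_int : ∀ s : ℝ, 0 < s → ∫ r in Set.Ioc (0:ℝ) a, r ^ (s - 1) = a ^ s / s := by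
    intro s hs
    rw [← intervalIntegral.integral_of_le ha.le,
      integral_rpow (Or.inl (by linarith : (-1:ℝ) < s - 1))]
    have h1 : s - 1 + 1 = s := by ring
    rw [h1, Real.zero_rpow hs.ne']
    ring
  have key_intOn : ∀ s : ℝ, 0 < s →
      IntegrableOn (fun r : ℝ => r ^ (s - 1)) (Set.Ioc (0:ℝ) a) := by
    intro s hs
    exact (intervalIntegrable_iff_integrableOn_Ioc_of_le ha.le).mp
      (intervalIntegral.intervalIntegrable_rpow' (by linarith))
  -- indicator functions
  set ψp : ℝ → ℝ := (Set.Ioc (0:ℝ) a).indicator (fun r => r ^ (p - 1)) with hψpdef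
  set ψq : ℝ → ℝ := (Set.Ioc (0:ℝ) a).indicator (fun r => r ^ (q - 1)) with hψqdef
  have hψp_int : Integrable ψp := (key_intOn p hp).integrable_indicator measurableSet_Ioc
  have hψq_int : Integrable ψq := (key_intOn q hq).integrable_indicator measurableSet_Ioc
  have hψp_val : ∫ r in Set.Ioi (0:ℝ), ψp r = a ^ p / p := by
    rw [hψpdef, setIntegral_indicator measurableSet_Ioc,
      Set.inter_eq_self_of_subset_right (Set.Ioc_subset_Ioi_self), key_int p hp]
  have hψq_val : ∫ r in Set.Ioi (0:ℝ), ψq r = a ^ q / q := by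
    rw [hψqdef, setIntegral_indicator measurableSet_Ioc,
      Set.inter_eq_self_of_subset_right (Set.Ioc_subset_Ioi_self), key_int q hq]
  -- the comparison functions
  set φp : ℝ → ℝ := fun r => f r * r ^ (p - 1) - F * ψp r with hφpdef
  set φq : ℝ → ℝ := fun r => f r * r ^ (q - 1) - F * ψq r with hφqdef
  have hφp_int : IntegrableOn φp (Set.Ioi (0:ℝ)) :=
    hip.sub ((hψp_int.const_mul F).integrableOn)
  have hφq_int : IntegrableOn φq (Set.Ioi (0:ℝ)) :=
    hiq.sub ((hψq_int.const_mul F).integrableOn)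
  -- ∫ φp = 0
  have hφp_val : ∫ r in Set.Ioi (0:ℝ), φp r = 0 := by
    rw [hφpdef]
    rw [integral_sub hip ((hψp_int.const_mul F).integrableOn),
      integral_const_mul, hψp_val, ha_pow]
    field_simp
    rw [← hIpdef]
    ring
  -- ∫ φq = Iq - F * a^q/q
  have hφq_val : ∫ r in Set.Ioi (0:ℝ), φq r = Iq - F * (a ^ q / q) := by
    rw [hφqdef]
    rw [integral_sub hiq ((hψq_int.const_mul F).integrableOn),
      integral_const_mul, hψq_val]
  -- pointwise a.e. comparison
  have hptwise : ∀ᵐ r ∂(volume.restrict (Set.Ioi (0:ℝ))),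
      a ^ (q - p) * φp r ≤ φq r := by
    filter_upwards [hfae, ae_restrict_mem measurableSet_Ioi] with r hfr hr
    have hr0 : (0:ℝ) < r := hr
    have hrp : (0:ℝ) < r ^ (p - 1) := Real.rpow_pos_of_pos hr0 _
    have hsplit : r ^ (q - 1) = r ^ (p - 1) * r ^ (q - p) := by
      rw [← Real.rpow_add hr0]; ring_nf
    have haqp : (0:ℝ) ≤ a ^ (q - p) := Real.rpow_nonneg ha.le _
    show a ^ (q - p) * (f r * r ^ (p - 1) - F * ψp r) ≤ f r * r ^ (q - 1) - F * ψq r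
    by_cases hra : r ≤ a
    · -- r ∈ Ioc 0 a
      have hmem : r ∈ Set.Ioc (0:ℝ) a := ⟨hr0, hra⟩
      have hψpr : ψp r = r ^ (p - 1) := by rw [hψpdef, Set.indicator_of_mem hmem]
      have hψqr : ψq r = r ^ (q - 1) := by rw [hψqdef, Set.indicator_of_mem hmem]
      rw [hψpr, hψqr]
      have hle : r ^ (q - p) ≤ a ^ (q - p) :=
        Real.rpow_le_rpow hr0.le hra (by linarith)
      nlinarith [mul_nonneg (mul_nonneg (sub_nonneg.mpr hfr) hrp.le)
        (sub_nonneg.mpr hle), hsplit]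
    · -- r > a
      push_neg at hra
      have hmem : r ∉ Set.Ioc (0:ℝ) a := fun h => absurd h.2 (not_le.mpr hra)
      have hψpr : ψp r = 0 := by rw [hψpdef, Set.indicator_of_notMem hmem]
      have hψqr : ψq r = 0 := by rw [hψqdef, Set.indicator_of_notMem hmem]
      rw [hψpr, hψqr]
      have hle : a ^ (q - p) ≤ r ^ (q - p) :=
        Real.rpow_le_rpow ha.le hra.le (by linarith)
      nlinarith [mul_nonneg (mul_nonneg (hf0 r) hrp.le) (sub_nonneg.mpr hle), hsplit]
  -- integrate the comparison
  have hineq : 0 ≤ Iq - F * (a ^ q / q) := by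
    have h1 : ∫ r in Set.Ioi (0:ℝ), a ^ (q - p) * φp r
        ≤ ∫ r in Set.Ioi (0:ℝ), φq r :=
      integral_mono_ae (hφp_int.const_mul _) hφq_int hptwise
    rwa [integral_const_mul, hφp_val, mul_zero, hφq_val] at h1
  -- conclude
  have haq : a ^ q ≤ (q / F) * Iq := by
    rw [div_mul_eq_mul_div, le_div_iff₀ hFpos]
    have h2 : F * (a ^ q / q) * q = a ^ q * F := by
      field_simp
    nlinarith [mul_le_mul_of_nonneg_right hineq hq.le]
  calc ((p / F) * Ip) ^ (1 / p) = a := rfl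
    _ = (a ^ q) ^ (1 / q) := by
        rw [one_div, Real.rpow_rpow_inv ha.le hq.ne']
    _ ≤ ((q / F) * Iq) ^ (1 / q) :=
        Real.rpow_le_rpow (Real.rpow_nonneg ha.le q) haq (by positivity)
end
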